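/- Let Fix(Ψ) = {h ∈ C(K) : Ψ(h) = h} and L = {π(|h|²) − |h|² : h ∈ Fix(Ψ)}. Then ∂U = {x ∈ K : g(x) = 0 for every g ∈ L}; in particular there is no point z₀ ∈ U with g(z₀) = 0 for all g ∈ L. -/

import Mathlib

/-!
Off `U` the map `Ψ` fixes every function, so `Ψⁿ(|h|²) = |h|²` on `∂U`. For `z ∈ U`, let `r`
be the barrier of (A) at a boundary point `a`; since `r ≤ Ψ r`, its iterates increase to a fixed
point `f = π r` of `Ψ` with `f = r` on `∂U`, so `f` is not constant. At a boundary point `x`, the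
iterates and their limit are squeezed between the starting function and its superinvariant
majorants `const + c·(-r_x)` built from the barrier `r_x` at `x`, which gives continuity at `x`;
Dini's theorem then makes the convergence uniform. By Jensen `f² ≤ Ψ(f²)`, so `p = π(f²) ≥ f²`
exists in the same way, and the maximum principle (B) forbids `p(z) = f(z)²`.
-/

open MeasureTheory Filter Topology ComplexOrder

/-- `Φ` is a Markov operator on the bounded Borel measurable functions on `U`:
for each `x` there is a Borel probability measure `P x` representing `Φ` at `x`. -/
def IsMarkovOperator {U : Type*} [MeasurableSpace U]
    (Φ : (U → ℂ) → (U → ℂ)) : Prop :=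
  ∀ x : U, ∃ P : Measure U, IsProbabilityMeasure P ∧
    ∀ f : U → ℂ, Measurable f → (∃ C : ℝ, ∀ y, ‖f y‖ ≤ C) →
      Φ f x = ∫ y, f y ∂P

/-- `Φ` has the strong Feller property: it maps bounded Borel measurable
functions to continuous functions. -/
def HasStrongFeller {U : Type*} [MeasurableSpace U] [TopologicalSpace U]
    (Φ : (U → ℂ) → (U → ℂ)) : Prop :=
  ∀ f : U → ℂ, Measurable f → (∃ C : ℝ, ∀ y, ‖f y‖ ≤ C) → Continuous (Φ f)

/-- Boundary condition (A): for each boundary point `x` there is a barrier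
`h ∈ C(K)` with `h x = 0`, `h < 0` off `x`, and `Φ (h_U) ≥ h_U` on `U`. -/
def CondA {K : Type*} [TopologicalSpace K] (U : Set K)
    (Φ : (↥U → ℂ) → (↥U → ℂ)) : Prop :=
  ∀ x ∈ Uᶜ, ∃ h : C(K, ℂ), h x = 0 ∧ (∀ y : K, y ≠ x → h y < 0) ∧
    ∀ u : ↥U, h u.1 ≤ Φ (fun v : ↥U => h v.1) u

/-- Maximum principle (B): every real-valued `g ∈ C(K)` with `Φ (g_U) ≥ g_U`
on `U` attaining its global maximum inside `U` is constant. -/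
def CondB {K : Type*} [TopologicalSpace K] (U : Set K)
    (Φ : (↥U → ℂ) → (↥U → ℂ)) : Prop :=
  ∀ g : C(K, ℂ), (∀ x : K, (g x).im = 0) →
    (∀ u : ↥U, g u.1 ≤ Φ (fun v : ↥U => g v.1) u) →
    (∃ z ∈ U, ∀ x : K, g x ≤ g z) →
    ∀ x y : K, g x = g y

/-- The map `Ψ` : `Ψ f = Φ (f_U)` on `U` and `Ψ f = f` on `∂U = K \ U`. -/
noncomputable def psiFun {K : Type*} (U : Set K)
    (Φ : (↥U → ℂ) → (↥U → ℂ)) (f : K → ℂ) : K → ℂ :=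
  open Classical in fun x => if hx : x ∈ U then Φ (fun v : ↥U => f v.1) ⟨x, hx⟩ else f x

def BddMeasurable {X : Type*} [MeasurableSpace X] (f : X → ℝ) : Prop :=
  Measurable f ∧ ∃ C, ∀ x, |f x| ≤ C

section BddMeasurable

variable {X : Type*} [MeasurableSpace X] {f : X → ℝ}

theorem BddMeasurable.integrable (hf : BddMeasurable f) (μ : Measure X) [IsFiniteMeasure μ] :
    Integrable f μ :=
  let ⟨C, hC⟩ := hf.2
  .of_bound hf.1.aestronglyMeasurable C (ae_of_all _ hC)

theorem BddMeasurable.memLp_two (hf : BddMeasurable f) (μ : Measure X) [IsFiniteMeasure μ] :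
    MemLp f 2 μ :=
  let ⟨C, hC⟩ := hf.2
  .of_bound hf.1.aestronglyMeasurable C (ae_of_all _ hC)

theorem bddMeasurable_const (c : ℝ) : BddMeasurable fun _ : X => c :=
  ⟨measurable_const, |c|, fun _ => le_rfl⟩

theorem Continuous.bddMeasurable [TopologicalSpace X] [CompactSpace X] [OpensMeasurableSpace X]
    (hf : Continuous f) : BddMeasurable f :=
  ⟨hf.measurable, (isCompact_univ.image (continuous_abs.comp hf)).bddAbove.imp
    fun _ hC x => hC ⟨x, trivial, rfl⟩⟩

end BddMeasurable

theorem continuousAt_of_le_of_forall_lt {X : Type*} [TopologicalSpace X] {f g : X → ℝ} {x : X}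
    (hf : ContinuousAt f x) (hfg : f ≤ g) (hx : g x = f x)
    (hup : ∀ b > g x, ∃ w : X → ℝ, ContinuousAt w x ∧ w x < b ∧ g ≤ w) :
    ContinuousAt g x := by
  refine tendsto_order.2 ⟨fun a ha => ?_, fun b hb => ?_⟩
  · filter_upwards [(tendsto_order.1 hf).1 a (hx ▸ ha)] with y hy using hy.trans_le (hfg y)
  · obtain ⟨w, hw, hwb, hgw⟩ := hup b hb
    filter_upwards [(tendsto_order.1 hw).2 b hwb] with y hy using (hgw y).trans_lt hy

theorem exists_le_add_mul_of_pos {X : Type*} [TopologicalSpace X] [CompactSpace X]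
    {f s : X → ℝ} {x : X} (hf : Continuous f) (hs : Continuous s) (hs_nonneg : 0 ≤ s)
    (hs_pos : ∀ y ≠ x, 0 < s y) {ε : ℝ} (hε : 0 < ε) :
    ∃ c ≥ 0, ∀ y, f y ≤ f x + ε + c * s y := by
  set V := {y | f x + ε ≤ f y}
  have hV : IsCompact V := (isClosed_le continuous_const hf).isCompact
  obtain ⟨δ, hδ, hδV⟩ := hV.exists_forall_le' hs.continuousOn fun y hy =>
    hs_pos y fun h => by subst h; simp only [V, Set.mem_ofPred_eq] at hy; linarith
  obtain ⟨B, hB⟩ := (isCompact_univ.image hf).bddAbove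
  have hfB : ∀ y, f y ≤ B := fun y => hB ⟨y, trivial, rfl⟩
  refine ⟨(B - f x) / δ, div_nonneg (sub_nonneg.2 (hfB x)) hδ.le, fun y => ?_⟩
  by_cases hy : y ∈ V
  · have : B - f x ≤ (B - f x) / δ * s y := by
      rw [div_mul_eq_mul_div, le_div_iff₀ hδ]
      exact mul_le_mul_of_nonneg_left (hδV y hy) (sub_nonneg.2 (hfB x))
    linarith [hfB y]
  · have : 0 ≤ (B - f x) / δ * s y :=
      mul_nonneg (div_nonneg (sub_nonneg.2 (hfB x)) hδ.le) (hs_nonneg y)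
    simp only [V, Set.mem_ofPred_eq, not_le] at hy
    linarith

section MarkovOperator

variable {K : Type*} [MeasurableSpace K]
  {U : Set K} {Φ : (↥U → ℂ) → (↥U → ℂ)}

/-- The transition law of `Ψ` at `x`. -/
noncomputable def markovMeasure (hM : IsMarkovOperator Φ) (x : K) : Measure K :=
  open Classical in
  if hx : x ∈ U then (hM ⟨x, hx⟩).choose.map Subtype.val else Measure.dirac x

instance (hM : IsMarkovOperator Φ) (x : K) : IsProbabilityMeasure (markovMeasure hM x) := by
  unfold markovMeasure
  split_ifs with hx
  · have := (hM ⟨x, hx⟩).choose_spec.1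
    exact Measure.isProbabilityMeasure_map measurable_subtype_coe.aemeasurable
  · infer_instance

noncomputable def markovOp (hM : IsMarkovOperator Φ) (f : K → ℝ) (x : K) : ℝ :=
  ∫ y, f y ∂markovMeasure hM x

variable (hM : IsMarkovOperator Φ) {f g : K → ℝ}

theorem markovOp_of_notMem (hf : Measurable f) {x : K} (hx : x ∉ U) :
    markovOp hM f x = f x := by
  rw [markovOp, markovMeasure, dif_neg hx, integral_dirac' f x hf.stronglyMeasurable]

theorem phi_ofReal_apply (hf : BddMeasurable f) (u : ↥U) :
    Φ (fun v => (f v : ℂ)) u = markovOp hM f u := by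
  obtain ⟨C, hC⟩ := hf.2
  have hrep := (hM u).choose_spec.2 (fun v => (f v : ℂ))
    (Complex.measurable_ofReal.comp (hf.1.comp measurable_subtype_coe))
    ⟨C, fun v => by simpa using hC v⟩
  rw [hrep, integral_complex_ofReal, markovOp, markovMeasure, dif_pos u.2,
    integral_map measurable_subtype_coe.aemeasurable hf.1.aestronglyMeasurable]

theorem psiFun_ofReal (hf : BddMeasurable f) :
    psiFun U Φ (fun y => (f y : ℂ)) = fun y => (markovOp hM f y : ℂ) := by
  funext x
  by_cases hx : x ∈ U
  · exact (dif_pos hx).trans (phi_ofReal_apply hM hf ⟨x, hx⟩)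
  · rw [psiFun, dif_neg hx, markovOp_of_notMem hM hf.1 hx]

theorem markovOp_mono (hf : BddMeasurable f) (hg : BddMeasurable g) (hfg : f ≤ g) :
    markovOp hM f ≤ markovOp hM g := fun _ =>
  integral_mono (hf.integrable _) (hg.integrable _) hfg

theorem markovOp_const (c : ℝ) : markovOp hM (fun _ => c) = fun _ => c := by
  funext x; simp [markovOp]

theorem markovOp_sub (hf : BddMeasurable f) (hg : BddMeasurable g) :
    markovOp hM (f - g) = markovOp hM f - markovOp hM g :=
  funext fun _ => integral_sub (hf.integrable _) (hg.integrable _)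

theorem markovOp_const_mul (c : ℝ) :
    markovOp hM (fun y => c * f y) = fun y => c * markovOp hM f y :=
  funext fun _ => integral_const_mul c f

theorem markovOp_const_add (hf : BddMeasurable f) (c : ℝ) :
    markovOp hM (fun y => c + f y) = fun y => c + markovOp hM f y := by
  funext x
  rw [markovOp, integral_add (integrable_const c) (hf.integrable _)]
  simp [markovOp]

theorem sq_le_markovOp_sq_of_markovOp_eq (hf : BddMeasurable f) (hf_fix : markovOp hM f = f) :
    f ^ 2 ≤ markovOp hM (f ^ 2) := fun x => by
  have := ProbabilityTheory.variance_nonneg f (markovMeasure hM x)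
  rw [ProbabilityTheory.variance_eq_sub (hf.memLp_two _)] at this
  simpa [← congrFun hf_fix x, markovOp] using this

theorem tendsto_markovOp {F : ℕ → K → ℝ} {C : ℝ} (hF : ∀ n, Measurable (F n))
    (hC : ∀ n y, |F n y| ≤ C) (hlim : ∀ y, Tendsto (fun n => F n y) atTop (𝓝 (f y))) (x : K) :
    Tendsto (fun n => markovOp hM (F n) x) atTop (𝓝 (markovOp hM f x)) :=
  tendsto_integral_of_dominated_convergence (fun _ => C) (fun n => (hF n).aestronglyMeasurable)
    (integrable_const C) (fun n => ae_of_all _ (hC n)) (ae_of_all _ hlim)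

variable [TopologicalSpace K] (hSF : HasStrongFeller Φ)
include hSF

theorem continuousOn_markovOp (hf : BddMeasurable f) : ContinuousOn (markovOp hM f) U := by
  obtain ⟨C, hC⟩ := hf.2
  rw [continuousOn_iff_continuous_domRestrict]
  refine (Complex.continuous_re.comp (hSF (fun v => (f v : ℂ)) (Complex.measurable_ofReal.comp
    (hf.1.comp measurable_subtype_coe)) ⟨C, fun v => by simpa using hC v⟩)).congr fun u => ?_
  simp [phi_ofReal_apply hM hf u]

variable [OpensMeasurableSpace K] (hU : IsOpen U)
include hU

theorem bddMeasurable_markovOp (hf : BddMeasurable f) : BddMeasurable (markovOp hM f) := by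
  obtain ⟨C, hC⟩ := hf.2
  refine ⟨measurable_of_restrict_of_restrict_compl hU.measurableSet
    (continuousOn_iff_continuous_domRestrict.1 (continuousOn_markovOp hM hSF hf)).measurable ?_,
    C, fun x => ?_⟩
  · have : Uᶜ.domRestrict (markovOp hM f) = Uᶜ.domRestrict f :=
      funext fun v => markovOp_of_notMem hM hf.1 v.2
    exact this ▸ hf.1.comp measurable_subtype_coe
  · simpa [markovOp] using norm_integral_le_of_norm_le_const (μ := markovMeasure hM x)
      (ae_of_all _ fun y => (Real.norm_eq_abs _).trans_le (hC y))

theorem bddMeasurable_iterate_markovOp (hf : BddMeasurable f) (n : ℕ) :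
    BddMeasurable ((markovOp hM)^[n] f) := by
  induction n with
  | zero => exact hf
  | succ n ih =>
    rw [Function.iterate_succ_apply']
    exact bddMeasurable_markovOp hM hSF hU ih

theorem iterate_markovOp_le (hf : BddMeasurable f) (hg : BddMeasurable g) (hfg : f ≤ g)
    (hg_super : markovOp hM g ≤ g) (n : ℕ) : (markovOp hM)^[n] f ≤ g := by
  induction n with
  | zero => exact hfg
  | succ n ih =>
    rw [Function.iterate_succ_apply']
    exact (markovOp_mono hM (bddMeasurable_iterate_markovOp hM hSF hU hf n) hg ih).trans hg_super

theorem monotone_iterate_markovOp (hf : BddMeasurable f) (hf_sub : f ≤ markovOp hM f) :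
    Monotone fun n => (markovOp hM)^[n] f := by
  refine monotone_nat_of_le_succ fun n => ?_
  induction n with
  | zero => exact hf_sub
  | succ n ih =>
    rw [Function.iterate_succ_apply', Function.iterate_succ_apply' _ (n + 1)]
    exact markovOp_mono hM (bddMeasurable_iterate_markovOp hM hSF hU hf n)
      (bddMeasurable_iterate_markovOp hM hSF hU hf (n + 1)) ih

theorem psiFun_iterate_ofReal (hf : BddMeasurable f) (n : ℕ) :
    (psiFun U Φ)^[n] (fun y => (f y : ℂ)) = fun y => ((markovOp hM)^[n] f y : ℂ) := by
  induction n with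
  | zero => rfl
  | succ n ih =>
    rw [Function.iterate_succ_apply', ih, Function.iterate_succ_apply',
      psiFun_ofReal hM (bddMeasurable_iterate_markovOp hM hSF hU hf n)]

end MarkovOperator

section Barriers

variable {K : Type*} [TopologicalSpace K] [CompactSpace K] [MeasurableSpace K]
  [OpensMeasurableSpace K] {U : Set K} {Φ : (↥U → ℂ) → (↥U → ℂ)} (hM : IsMarkovOperator Φ)
  {f : K → ℝ}

theorem CondA.exists_barrier (hA : CondA U Φ) {x : K} (hx : x ∉ U) :
    ∃ r : K → ℝ, Continuous r ∧ r x = 0 ∧ (∀ y ≠ x, r y < 0) ∧ r ≤ markovOp hM r := by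
  obtain ⟨h, hx0, hneg, hsub⟩ := hA x hx
  have him : ∀ y, (h y).im = 0 := fun y => by
    rcases eq_or_ne y x with rfl | hy
    · simp [hx0]
    · exact (Complex.lt_def.1 (hneg y hy)).2
  have hre : ∀ y, ((h y).re : ℂ) = h y := fun y => Complex.ext rfl (by simp [him])
  have hr : Continuous fun y => (h y).re := Complex.continuous_re.comp h.continuous
  refine ⟨fun y => (h y).re, hr, by simp [hx0], fun y hy => (Complex.lt_def.1 (hneg y hy)).1,
    fun y => ?_⟩
  by_cases hy : y ∈ U
  · have := hsub ⟨y, hy⟩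
    rw [show (fun v : ↥U => h v.1) = fun v => ((h v.1).re : ℂ) from funext fun v => (hre v.1).symm,
      phi_ofReal_apply hM hr.bddMeasurable] at this
    simpa using (Complex.le_def.1 this).1
  · exact (markovOp_of_notMem hM hr.measurable hy).ge

theorem CondA.exists_superinvariant_majorant (hA : CondA U Φ) {x : K} (hx : x ∉ U)
    (hf : Continuous f) {b : ℝ} (hb : f x < b) :
    ∃ w : K → ℝ, Continuous w ∧ markovOp hM w ≤ w ∧ f ≤ w ∧ w x < b := by
  obtain ⟨r, hr, hrx, hneg, hsub⟩ := hA.exists_barrier hM hx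
  have hr_nonpos : ∀ y, r y ≤ 0 := fun y => by
    rcases eq_or_ne y x with rfl | hy
    exacts [hrx.le, (hneg y hy).le]
  obtain ⟨c, hc, hfc⟩ := exists_le_add_mul_of_pos (ε := (b - f x) / 2) hf hr.neg
    (fun y => neg_nonneg.2 (hr_nonpos y)) (fun y hy => neg_pos.2 (hneg y hy)) (by linarith)
  refine ⟨fun y => (f x + (b - f x) / 2) + -c * r y, by fun_prop, fun y => ?_,
    fun y => by simpa using hfc y, by simp only [hrx]; linarith⟩
  rw [markovOp_const_add hM (by fun_prop : Continuous fun y => -c * r y).bddMeasurable,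
    markovOp_const_mul]
  linarith [mul_le_mul_of_nonneg_left (hsub y) hc]

end Barriers

section Limit

variable {K : Type*} [TopologicalSpace K] [MeasurableSpace K] [OpensMeasurableSpace K]
  {U : Set K} {Φ : (↥U → ℂ) → (↥U → ℂ)} (hM : IsMarkovOperator Φ) {f : K → ℝ}

/-- The paper's `π f`, for `f ≤ Ψ f` (so that the iterates increase). -/
noncomputable def markovLimit (f : K → ℝ) (y : K) : ℝ :=
  ⨆ n, (markovOp hM)^[n] f y

variable (hSF : HasStrongFeller Φ) (hU : IsOpen U)
include hSF hU

theorem iterate_markovOp_of_notMem (hf : BddMeasurable f) {x : K} (hx : x ∉ U) (n : ℕ) :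
    (markovOp hM)^[n] f x = f x := by
  induction n with
  | zero => rfl
  | succ n ih =>
    rw [Function.iterate_succ_apply',
      markovOp_of_notMem hM (bddMeasurable_iterate_markovOp hM hSF hU hf n).1 hx, ih]

theorem markovLimit_le (hf : BddMeasurable f) {w : K → ℝ} (hw : BddMeasurable w) (hfw : f ≤ w)
    (hw_super : markovOp hM w ≤ w) : markovLimit hM f ≤ w :=
  fun y => ciSup_le fun n => iterate_markovOp_le hM hSF hU hf hw hfw hw_super n y

variable (hf : BddMeasurable f) (hf_sub : f ≤ markovOp hM f)
include hf hf_sub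

theorem abs_iterate_markovOp_le {C : ℝ} (hC : ∀ y, |f y| ≤ C) (n : ℕ) (y : K) :
    |(markovOp hM)^[n] f y| ≤ C := by
  refine abs_le.2 ⟨(abs_le.1 (hC y)).1.trans ?_, ?_⟩
  · exact monotone_iterate_markovOp hM hSF hU hf hf_sub (Nat.zero_le n) y
  · exact iterate_markovOp_le hM hSF hU hf (g := fun _ => C) (bddMeasurable_const C)
      (fun y => (abs_le.1 (hC y)).2) (markovOp_const hM C).le n y

theorem tendsto_markovLimit (y : K) :
    Tendsto (fun n => (markovOp hM)^[n] f y) atTop (𝓝 (markovLimit hM f y)) := by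
  obtain ⟨C, hC⟩ := hf.2
  exact tendsto_atTop_ciSup (fun _ _ hmn => monotone_iterate_markovOp hM hSF hU hf hf_sub hmn y)
    ⟨C, by
      rintro _ ⟨n, rfl⟩
      exact (abs_le.1 (abs_iterate_markovOp_le hM hSF hU hf hf_sub hC n y)).2⟩

theorem iterate_markovOp_le_markovLimit (n : ℕ) : (markovOp hM)^[n] f ≤ markovLimit hM f :=
  fun y => (monotone_iterate_markovOp hM hSF hU hf hf_sub).ge_of_tendsto
    (tendsto_pi_nhds.2 (tendsto_markovLimit hM hSF hU hf hf_sub)) n y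

theorem markovLimit_of_notMem {x : K} (hx : x ∉ U) : markovLimit hM f x = f x :=
  tendsto_nhds_unique (tendsto_markovLimit hM hSF hU hf hf_sub x) <| by
    simp only [iterate_markovOp_of_notMem hM hSF hU hf hx, tendsto_const_nhds]

theorem bddMeasurable_markovLimit : BddMeasurable (markovLimit hM f) := by
  obtain ⟨C, hC⟩ := hf.2
  refine ⟨measurable_of_tendsto_metrizable
    (fun n => (bddMeasurable_iterate_markovOp hM hSF hU hf n).1)
    (tendsto_pi_nhds.2 (tendsto_markovLimit hM hSF hU hf hf_sub)), C, fun y => ?_⟩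
  exact le_of_tendsto' (tendsto_markovLimit hM hSF hU hf hf_sub y).abs
    (abs_iterate_markovOp_le hM hSF hU hf hf_sub hC · y)

theorem markovOp_markovLimit : markovOp hM (markovLimit hM f) = markovLimit hM f := by
  obtain ⟨C, hC⟩ := hf.2
  funext x
  refine tendsto_nhds_unique (tendsto_markovOp hM
    (fun n => (bddMeasurable_iterate_markovOp hM hSF hU hf n).1)
    (abs_iterate_markovOp_le hM hSF hU hf hf_sub hC) (tendsto_markovLimit hM hSF hU hf hf_sub) x) ?_
  simp_rw [← Function.iterate_succ_apply' (markovOp hM)]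
  exact (tendsto_markovLimit hM hSF hU hf hf_sub x).comp (tendsto_add_atTop_nat 1)

end Limit

section Continuity

variable {K : Type*} [TopologicalSpace K] [CompactSpace K] [MeasurableSpace K]
  [OpensMeasurableSpace K] {U : Set K} {Φ : (↥U → ℂ) → (↥U → ℂ)} (hM : IsMarkovOperator Φ)
  (hA : CondA U Φ) (hU : IsOpen U) {f g : K → ℝ}
include hA hU

theorem CondA.continuous_of_le_of_forall_superinvariant (hf : Continuous f)
    (hgU : ContinuousOn g U) (hfg : f ≤ g) (hg_bdry : ∀ x ∉ U, g x = f x)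
    (hg_le : ∀ w, Continuous w → markovOp hM w ≤ w → f ≤ w → g ≤ w) : Continuous g := by
  refine continuous_iff_continuousAt.2 fun x => ?_
  by_cases hx : x ∈ U
  · exact hgU.continuousAt (hU.mem_nhds hx)
  refine continuousAt_of_le_of_forall_lt hf.continuousAt hfg (hg_bdry x hx) fun b hb => ?_
  obtain ⟨w, hw, hw_super, hfw, hwb⟩ :=
    hA.exists_superinvariant_majorant hM hx hf (hg_bdry x hx ▸ hb)
  exact ⟨w, hw.continuousAt, hwb, hg_le w hw hw_super hfw⟩

variable (hSF : HasStrongFeller Φ) (hf : Continuous f) (hf_sub : f ≤ markovOp hM f)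
include hSF hf hf_sub

theorem continuous_iterate_markovOp (n : ℕ) : Continuous ((markovOp hM)^[n] f) := by
  cases n with
  | zero => exact hf
  | succ n =>
    have hb := bddMeasurable_iterate_markovOp hM hSF hU hf.bddMeasurable
    refine hA.continuous_of_le_of_forall_superinvariant hM hU hf ?_
      (monotone_iterate_markovOp hM hSF hU hf.bddMeasurable hf_sub (Nat.zero_le _))
      (fun x hx => iterate_markovOp_of_notMem hM hSF hU hf.bddMeasurable hx _)
      fun w hw hw_super hfw => iterate_markovOp_le hM hSF hU hf.bddMeasurable hw.bddMeasurable
        hfw hw_super _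
    rw [Function.iterate_succ_apply']
    exact continuousOn_markovOp hM hSF (hb n)

theorem continuous_markovLimit : Continuous (markovLimit hM f) := by
  have hq := bddMeasurable_markovLimit hM hSF hU hf.bddMeasurable hf_sub
  refine hA.continuous_of_le_of_forall_superinvariant hM hU hf ?_
    (iterate_markovOp_le_markovLimit hM hSF hU hf.bddMeasurable hf_sub 0)
    (fun x hx => markovLimit_of_notMem hM hSF hU hf.bddMeasurable hf_sub hx)
    fun w hw hw_super hfw => markovLimit_le hM hSF hU hf.bddMeasurable hw.bddMeasurable hfw hw_super
  rw [← markovOp_markovLimit hM hSF hU hf.bddMeasurable hf_sub]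
  exact continuousOn_markovOp hM hSF hq

theorem tendstoUniformly_markovLimit :
    TendstoUniformly (fun n => (markovOp hM)^[n] f) (markovLimit hM f) atTop :=
  Monotone.tendstoUniformly_of_forall_tendsto (continuous_iterate_markovOp hM hA hU hSF hf hf_sub)
    (monotone_iterate_markovOp hM hSF hU hf.bddMeasurable hf_sub)
    (continuous_markovLimit hM hA hU hSF hf hf_sub)
    (tendsto_markovLimit hM hSF hU hf.bddMeasurable hf_sub)

end Continuity

theorem psiFun_iterate_apply_of_notMem {K : Type*} {U : Set K} (Φ : (↥U → ℂ) → (↥U → ℂ))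
    (g : K → ℂ) {x : K} (hx : x ∉ U) (n : ℕ) : (psiFun U Φ)^[n] g x = g x := by
  induction n with
  | zero => rfl
  | succ n ih => rw [Function.iterate_succ_apply', psiFun, dif_neg hx, ih]

section Rigidity

variable {K : Type*} [TopologicalSpace K] [CompactSpace K] [MeasurableSpace K]
  [OpensMeasurableSpace K] {U : Set K} {Φ : (↥U → ℂ) → (↥U → ℂ)} (hM : IsMarkovOperator Φ)
  {f : K → ℝ}

theorem CondB.eq_of_forall_le (hB : CondB U Φ) (hf : Continuous f)
    (hf_sub : ∀ y ∈ U, f y ≤ markovOp hM f y) {z : K} (hz : z ∈ U) (hf_max : ∀ x, f x ≤ f z)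
    (x y : K) : f x = f y := by
  let g : C(K, ℂ) := ⟨fun y => (f y : ℂ), by fun_prop⟩
  have hg_sub : ∀ u : ↥U, g u ≤ Φ (fun v => g v) u := fun u => by
    simpa [g, phi_ofReal_apply hM hf.bddMeasurable] using hf_sub u u.2
  exact Complex.ofReal_injective <| hB g (fun _ => Complex.ofReal_im _) hg_sub
    ⟨z, hz, fun x => Complex.real_le_real.2 (hf_max x)⟩ x y

/-- If `p ≥ f²` is fixed and `f²` touches it inside `U`, the maximum principle first gives
`Ψ (f²) = f²`, and then applied to `2 f(z) f - f²` it makes `f` constant. -/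
theorem CondB.sq_lt_of_sq_le (hB : CondB U Φ) (hf : Continuous f) (hf_fix : markovOp hM f = f)
    {a b : K} (hab : f a ≠ f b) {p : K → ℝ} (hp : Continuous p) (hp_fix : markovOp hM p = p)
    (hfp : f ^ 2 ≤ p) {z : K} (hz : z ∈ U) : f z ^ 2 < p z := by
  by_contra! hpz
  have hf2 : BddMeasurable (f ^ 2) := (hf.pow 2).bddMeasurable
  have hf2_sub := sq_le_markovOp_sq_of_markovOp_eq hM hf.bddMeasurable hf_fix
  have hp_eq : f ^ 2 = p := by
    have hconst := hB.eq_of_forall_le hM ((hf.pow 2).sub hp) (f := f ^ 2 - p)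
      (fun y _ => by
        rw [markovOp_sub hM hf2 hp.bddMeasurable, hp_fix]
        exact sub_le_sub_right (hf2_sub y) _)
      hz (fun x => by simpa [le_antisymm hpz (hfp z)] using hfp x)
    funext x
    simpa [le_antisymm hpz (hfp z), sub_eq_zero] using hconst x z
  have hf2_fix : markovOp hM (f ^ 2) = f ^ 2 := by rw [hp_eq, hp_fix]
  set c := f z
  have hg_fix :
      markovOp hM (fun y => 2 * c * f y - f y ^ 2) = fun y => 2 * c * f y - f y ^ 2 := by
    have := markovOp_sub hM (by fun_prop : Continuous fun y => 2 * c * f y).bddMeasurable hf2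
    rwa [markovOp_const_mul, hf_fix, hf2_fix] at this
  have hconst := hB.eq_of_forall_le hM (f := fun y => 2 * c * f y - f y ^ 2) (by fun_prop)
    (fun y _ => (congrFun hg_fix y).ge) hz (fun x => by nlinarith [sq_nonneg (f x - c)])
  have hfc : ∀ x, f x = c := fun x => by nlinarith [hconst x z, sq_nonneg (f x - c)]
  exact hab ((hfc a).trans (hfc b).symm)

end Rigidity

section Witness

variable {K : Type*} [TopologicalSpace K] [CompactSpace K] [MeasurableSpace K]
  [OpensMeasurableSpace K] {U : Set K} {Φ : (↥U → ℂ) → (↥U → ℂ)} (hM : IsMarkovOperator Φ)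
  (hSF : HasStrongFeller Φ) (hU : IsOpen U) (hA : CondA U Φ)
include hM hSF hU hA

theorem CondA.exists_markovOp_eq_ne {a b : K} (ha : a ∉ U) (hb : b ∉ U) (hab : a ≠ b) :
    ∃ f : K → ℝ, Continuous f ∧ markovOp hM f = f ∧ f a ≠ f b := by
  obtain ⟨r, hr, hra, hneg, hsub⟩ := hA.exists_barrier hM ha
  refine ⟨markovLimit hM r, continuous_markovLimit hM hA hU hSF hr hsub,
    markovOp_markovLimit hM hSF hU hr.bddMeasurable hsub, ?_⟩
  rw [markovLimit_of_notMem hM hSF hU hr.bddMeasurable hsub ha,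
    markovLimit_of_notMem hM hSF hU hr.bddMeasurable hsub hb, hra]
  exact (hneg b hab.symm).ne'

theorem CondB.exists_psiFun_eq_sq_ne (hB : CondB U Φ) {a b : K} (ha : a ∉ U) (hb : b ∉ U)
    (hab : a ≠ b) {z : K} (hz : z ∈ U) :
    ∃ (h : C(K, ℂ)) (p : K → ℂ), psiFun U Φ ⇑h = ⇑h ∧
      TendstoUniformly (fun n y => (psiFun U Φ)^[n] (fun z => ((‖h z‖ ^ 2 : ℝ) : ℂ)) y) p atTop ∧
      p z - ((‖h z‖ ^ 2 : ℝ) : ℂ) ≠ 0 := by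
  obtain ⟨f, hf, hf_fix, hfab⟩ := hA.exists_markovOp_eq_ne hM hSF hU ha hb hab
  have hf2 : Continuous (f ^ 2) := hf.pow 2
  have hf2_sub := sq_le_markovOp_sq_of_markovOp_eq hM hf.bddMeasurable hf_fix
  have hlt : f z ^ 2 < markovLimit hM (f ^ 2) z :=
    hB.sq_lt_of_sq_le hM hf hf_fix hfab (continuous_markovLimit hM hA hU hSF hf2 hf2_sub)
      (markovOp_markovLimit hM hSF hU hf2.bddMeasurable hf2_sub)
      (iterate_markovOp_le_markovLimit hM hSF hU hf2.bddMeasurable hf2_sub 0) hz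
  have hnorm : ∀ y, ((‖(f y : ℂ)‖ ^ 2 : ℝ) : ℂ) = ((f ^ 2) y : ℂ) := fun y => by simp
  refine ⟨⟨fun y => (f y : ℂ), by fun_prop⟩, fun y => (markovLimit hM (f ^ 2) y : ℂ), ?_, ?_, ?_⟩
  · change psiFun U Φ (fun y => (f y : ℂ)) = fun y => (f y : ℂ)
    rw [psiFun_ofReal hM hf.bddMeasurable, hf_fix]
  · simp only [ContinuousMap.coe_mk, hnorm,
      psiFun_iterate_ofReal hM hSF hU hf2.bddMeasurable]
    exact Complex.isometry_ofReal.uniformContinuous.comp_tendstoUniformly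
      (tendstoUniformly_markovLimit hM hA hU hSF hf2 hf2_sub)
  · simp only [ContinuousMap.coe_mk, hnorm, ne_eq, sub_eq_zero]
    exact_mod_cast hlt.ne'

end Witness

theorem stmt16_general {K : Type*} [MetricSpace K] [CompactSpace K]
    [MeasurableSpace K] [BorelSpace K]
    (U : Set K) (hUopen : IsOpen U)
    (hbd : ∃ a b : K, a ∈ Uᶜ ∧ b ∈ Uᶜ ∧ a ≠ b)
    (Φ : (↥U → ℂ) → (↥U → ℂ))
    (hM : IsMarkovOperator Φ) (hSF : HasStrongFeller Φ)
    (hA : CondA U Φ) (hB : CondB U Φ) :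
    Uᶜ = {x : K | ∀ (h : C(K, ℂ)) (p : K → ℂ), psiFun U Φ ⇑h = ⇑h →
        TendstoUniformly
          (fun n y => (psiFun U Φ)^[n] (fun z => ((‖h z‖ ^ 2 : ℝ) : ℂ)) y)
          p atTop →
        p x - ((‖h x‖ ^ 2 : ℝ) : ℂ) = 0} ∧
    ¬ ∃ z₀ ∈ U, ∀ (h : C(K, ℂ)) (p : K → ℂ), psiFun U Φ ⇑h = ⇑h →
        TendstoUniformly
          (fun n y => (psiFun U Φ)^[n] (fun z => ((‖h z‖ ^ 2 : ℝ) : ℂ)) y)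
          p atTop →
        p z₀ - ((‖h z₀‖ ^ 2 : ℝ) : ℂ) = 0 := by
  obtain ⟨a, b, ha, hb, hab⟩ := hbd
  have hwitness := fun z (hz : z ∈ U) => hB.exists_psiFun_eq_sq_ne hM hSF hUopen hA ha hb hab hz
  refine ⟨Set.ext fun x => ⟨fun hx h p _ hp => ?_, fun hx hxU => ?_⟩, ?_⟩
  · have hlim := hp.tendsto_at x
    simp only [psiFun_iterate_apply_of_notMem Φ _ hx] at hlim
    rw [tendsto_nhds_unique hlim tendsto_const_nhds, sub_self]
  · obtain ⟨h, p, hfix, hp, hne⟩ := hwitness x hxU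
    exact hne (hx h p hfix hp)
  · rintro ⟨z, hz, hzero⟩
    obtain ⟨h, p, hfix, hp, hne⟩ := hwitness z hz
    exact hne (hzero h p hfix hp)

/-- With `L = {π(|h|²) − |h|² : h ∈ Fix(Ψ)}`, the boundary
`∂U` is exactly the common zero set of `L`; in particular no point of `U`
is a common zero of `L`. -/
theorem stmt16 {K : Type*} [MetricSpace K] [CompactSpace K]
    [MeasurableSpace K] [BorelSpace K]
    (U : Set K) (hUopen : IsOpen U) (hUdense : Dense U)
    (hbd : ∃ a b : K, a ∈ Uᶜ ∧ b ∈ Uᶜ ∧ a ≠ b)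
    (Φ : (↥U → ℂ) → (↥U → ℂ))
    (hM : IsMarkovOperator Φ) (hSF : HasStrongFeller Φ)
    (hA : CondA U Φ) (hB : CondB U Φ) :
    Uᶜ = {x : K | ∀ (h : C(K, ℂ)) (p : K → ℂ), psiFun U Φ ⇑h = ⇑h →
        TendstoUniformly
          (fun n y => (psiFun U Φ)^[n] (fun z => ((‖h z‖ ^ 2 : ℝ) : ℂ)) y)
          p atTop →
        p x - ((‖h x‖ ^ 2 : ℝ) : ℂ) = 0} ∧
    ¬ ∃ z₀ ∈ U, ∀ (h : C(K, ℂ)) (p : K → ℂ), psiFun U Φ ⇑h = ⇑h →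
        TendstoUniformly
          (fun n y => (psiFun U Φ)^[n] (fun z => ((‖h z‖ ^ 2 : ℝ) : ℂ)) y)
          p atTop →
        p z₀ - ((‖h z₀‖ ^ 2 : ℝ) : ℂ) = 0 :=
  stmt16_general U hUopen hbd Φ hM hSF hA hB
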